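/- Let (G_n,d_n) be a sequence of admissible pairs with d_n > 1 and v(G_n) ≥ 1 for all n, which has large essential girth, and suppose v(G_n) → ∞ and there is a constant C with d_n ≤ C·v(G_n) for all n. Then 2e(G_n)/v(G_n)² → 0 as n → ∞. -/

import Mathlib

/-!
Write `S = ∑ deg²`. Cauchy–Schwarz gives `(2e)² ≤ v S`, and, since `S` is also the sum of the
codegrees `|N(a) ∩ N(c)|` over ordered pairs `(a, c)`, a second Cauchy–Schwarz gives
`S² ≤ v² ∑ codeg²`. The sum `∑ codeg²` counts closed 4-walks `a b c e`: those with `a ≠ c` and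
`b ≠ e` are injective homomorphisms of `C₄`, and each of the two degenerate families has size
at most `S ≤ v d²`. Hence `ρ⁴ ≤ 2 (d/v)² / v + (d/v)³ t_inj(C₄, G, d)` for `ρ = 2e/v²`, and the
right-hand side tends to `0` when `d = O(v)`, `v → ∞` and the essential girth is large.
-/

open Filter Topology

noncomputable def homCount {α β : Type*} (F : SimpleGraph α) (G : SimpleGraph β) : ℕ :=
  Nat.card (F →g G)

noncomputable def injCount {α β : Type*} (F : SimpleGraph α) (G : SimpleGraph β) : ℕ :=
  Nat.card {f : F →g G // Function.Injective f}

noncomputable def vdegree {α : Type*} (G : SimpleGraph α) (x : α) : ℕ :=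
  Nat.card (G.neighborSet x)

noncomputable def edgeCount {α : Type*} (G : SimpleGraph α) : ℕ := Nat.card G.edgeSet

noncomputable def numComponents {α : Type*} (F : SimpleGraph α) : ℕ :=
  Nat.card F.ConnectedComponent

noncomputable def numBigComponents {α : Type*} (F : SimpleGraph α) : ℕ :=
  Nat.card {c : F.ConnectedComponent // 2 ≤ Nat.card c.supp}

def Admissible {α : Type*} (G : SimpleGraph α) (d : ℝ) : Prop :=
  1 ≤ d ∧ ∀ x : α, (vdegree G x : ℝ) ≤ d

noncomputable def homDensity {α β : Type*} (F : SimpleGraph α) (G : SimpleGraph β) (d : ℝ) : ℝ :=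
  (homCount F G : ℝ) /
    ((Nat.card β : ℝ) ^ numComponents F * d ^ (Nat.card α - numComponents F))

noncomputable def injDensity {α β : Type*} (F : SimpleGraph α) (G : SimpleGraph β) (d : ℝ) : ℝ :=
  (injCount F G : ℝ) /
    ((Nat.card β : ℝ) ^ numComponents F * d ^ numBigComponents F *
      (d - 1) ^ (Nat.card α - numComponents F - numBigComponents F))

/-- A sequence of admissible pairs `(Gₙ, dₙ)` has large essential girth if
`t_inj(C_k, Gₙ, dₙ) → 0` for every `k ≥ 3`. -/
def LargeEssentialGirth (V : ℕ → Type) (G : ∀ n, SimpleGraph (V n)) (d : ℕ → ℝ) : Prop :=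
  ∀ k : ℕ, 3 ≤ k →
    Tendsto (fun n => injDensity (SimpleGraph.cycleGraph k) (G n) (d n)) atTop (𝓝 0)

open Finset Function

namespace SimpleGraph

variable {V : Type*} (G : SimpleGraph V)

def cycleGraphHom {n : ℕ} (f : Fin (n + 2) → V) (hf : ∀ i, G.Adj (f i) (f (i + 1))) :
    cycleGraph (n + 2) →g G where
  toFun := f
  map_rel' {u v} huv := by
    rcases cycleGraph_adj.mp huv with h | h
    · rw [sub_eq_iff_eq_add'] at h
      exact h ▸ (hf v).symm
    · rw [sub_eq_iff_eq_add'] at h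
      exact h ▸ hf u

variable {G} in
theorem exists_injective_cycleGraph_four_hom {a b c e : V} (hab : G.Adj a b) (hbc : G.Adj b c)
    (hce : G.Adj c e) (hea : G.Adj e a) (hac : a ≠ c) (hbe : b ≠ e) :
    ∃ f : cycleGraph 4 →g G, Injective f ∧ ⇑f = ![a, b, c, e] := by
  refine ⟨G.cycleGraphHom ![a, b, c, e] fun i => ?_, ?_, rfl⟩
  · fin_cases i <;> assumption
  · have hne : a ≠ b ∧ b ≠ c ∧ c ≠ e ∧ e ≠ a := ⟨hab.ne, hbc.ne, hce.ne, hea.ne⟩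
    intro i j hij
    fin_cases i <;> fin_cases j <;> simp_all [cycleGraphHom, eq_comm]

section Finite

variable [Fintype V] [DecidableEq V] [DecidableRel G.Adj]

theorem sum_card_offDiag_inter_neighborFinset_le_injCount :
    ∑ p ∈ (univ : Finset V).offDiag, #(G.neighborFinset p.1 ∩ G.neighborFinset p.2).offDiag
      ≤ injCount (cycleGraph 4) G := by
  set t := (univ : Finset V).offDiag.sigma fun p =>
    (G.neighborFinset p.1 ∩ G.neighborFinset p.2).offDiag
  -- `⟨(a, c), (b, e)⟩ ∈ t` is sent to the 4-cycle `a b c e`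
  have hcycle (x : t) : ∃ f : cycleGraph 4 →g G,
      Injective f ∧ ⇑f = ![x.1.1.1, x.1.2.1, x.1.1.2, x.1.2.2] := by
    obtain ⟨⟨⟨a, c⟩, b, e⟩, hx⟩ := x
    obtain ⟨hac, ⟨hab, hcb⟩, ⟨hae, hce⟩, hbe⟩ := by
      simpa only [t, mem_sigma, mem_offDiag, mem_inter, mem_neighborFinset, mem_univ, true_and]
        using hx
    exact exists_injective_cycleGraph_four_hom hab hcb.symm hce hae.symm hac hbe
  choose f hf_inj hf_coe using hcycle
  rw [← card_sigma, ← Nat.card_eq_finsetCard, injCount]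
  refine Nat.card_le_card_of_injective (fun x => ⟨f x, hf_inj x⟩) fun x y hxy => ?_
  have h := congrArg (fun g : {f : cycleGraph 4 →g G // Injective f} => ⇑g.1) hxy
  simp only [hf_coe] at h
  exact Subtype.ext (Sigma.ext (Prod.ext (congrFun h 0) (congrFun h 2))
    (heq_of_eq (Prod.ext (congrFun h 1) (congrFun h 3))))

theorem sum_card_inter_neighborFinset :
    ∑ p : V × V, #(G.neighborFinset p.1 ∩ G.neighborFinset p.2) = ∑ b, G.degree b ^ 2 := by
  have hmem (a c b : V) : b ∈ G.neighborFinset a ∩ G.neighborFinset c ↔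
      (a, c) ∈ G.neighborFinset b ×ˢ G.neighborFinset b := by
    simp [adj_comm]
  calc ∑ p : V × V, #(G.neighborFinset p.1 ∩ G.neighborFinset p.2)
      = ∑ p : V × V, ∑ b, if b ∈ G.neighborFinset p.1 ∩ G.neighborFinset p.2 then 1 else 0 := by
        simp only [sum_boole, filter_mem_eq_inter, univ_inter, Nat.cast_id]
    _ = ∑ b, ∑ p : V × V, if p ∈ G.neighborFinset b ×ˢ G.neighborFinset b then 1 else 0 := by
        rw [sum_comm]
        simp only [hmem]
    _ = ∑ b, G.degree b ^ 2 := by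
        simp only [sum_boole, filter_mem_eq_inter, univ_inter, Nat.cast_id, card_product, sq,
          card_neighborFinset_eq_degree]

theorem sum_card_inter_neighborFinset_sq_le :
    ∑ p : V × V, #(G.neighborFinset p.1 ∩ G.neighborFinset p.2) ^ 2
      ≤ 2 * ∑ b, G.degree b ^ 2 + injCount (cycleGraph 4) G := by
  set X := fun p : V × V => G.neighborFinset p.1 ∩ G.neighborFinset p.2
  have hsq (s : Finset V) : #s ^ 2 = #s.offDiag + #s := by
    have := Nat.le_mul_self #s
    rw [offDiag_card, sq]
    omega
  have hdiag : ∑ p ∈ univ.diag, #(X p).offDiag ≤ ∑ b, G.degree b ^ 2 := by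
    rw [sum_diag]
    gcongr with a
    simp [X, offDiag_card, sq]
  calc ∑ p, #(X p) ^ 2
      = ∑ p ∈ univ.diag, #(X p).offDiag + ∑ p ∈ univ.offDiag, #(X p).offDiag
          + ∑ b, G.degree b ^ 2 := by
        rw [← sum_union (disjoint_diag_offDiag _), diag_union_offDiag, univ_product_univ,
          ← sum_card_inter_neighborFinset, ← sum_add_distrib]
        simp only [hsq, X]
    _ ≤ ∑ b, G.degree b ^ 2 + injCount (cycleGraph 4) G + ∑ b, G.degree b ^ 2 := by
        gcongr
        exact G.sum_card_offDiag_inter_neighborFinset_le_injCount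
    _ = 2 * ∑ b, G.degree b ^ 2 + injCount (cycleGraph 4) G := by ring

theorem sq_sum_degree_sq_le :
    (∑ b, (G.degree b : ℝ) ^ 2) ^ 2 ≤
      (Fintype.card V : ℝ) ^ 2 * (2 * ∑ b, (G.degree b : ℝ) ^ 2 + injCount (cycleGraph 4) G) := by
  have hcodeg : ∑ b, (G.degree b : ℝ) ^ 2 =
      ∑ p : V × V, (#(G.neighborFinset p.1 ∩ G.neighborFinset p.2) : ℝ) := by
    exact_mod_cast G.sum_card_inter_neighborFinset.symm
  have hsq : ∑ p : V × V, (#(G.neighborFinset p.1 ∩ G.neighborFinset p.2) : ℝ) ^ 2 ≤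
      2 * ∑ b, (G.degree b : ℝ) ^ 2 + injCount (cycleGraph 4) G := by
    exact_mod_cast G.sum_card_inter_neighborFinset_sq_le
  calc (∑ b, (G.degree b : ℝ) ^ 2) ^ 2
      ≤ (#(univ : Finset (V × V)) : ℝ) *
          ∑ p : V × V, (#(G.neighborFinset p.1 ∩ G.neighborFinset p.2) : ℝ) ^ 2 :=
        hcodeg ▸ sq_sum_le_card_mul_sum_sq
    _ ≤ (Fintype.card V : ℝ) ^ 2 *
          (2 * ∑ b, (G.degree b : ℝ) ^ 2 + injCount (cycleGraph 4) G) := by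
        rw [card_univ, Fintype.card_prod, Nat.cast_mul, ← sq]
        gcongr

theorem two_mul_card_edgeFinset_pow_four_le {d : ℝ} (hdeg : ∀ x, (G.degree x : ℝ) ≤ d) :
    (2 * #G.edgeFinset : ℝ) ^ 4 ≤
      2 * (Fintype.card V : ℝ) ^ 5 * d ^ 2 +
        (Fintype.card V : ℝ) ^ 4 * injCount (cycleGraph 4) G := by
  have hedges : (2 * #G.edgeFinset : ℝ) ^ 2 ≤
      (Fintype.card V : ℝ) * ∑ b, (G.degree b : ℝ) ^ 2 := by
    have : (2 * #G.edgeFinset : ℝ) = ∑ b, (G.degree b : ℝ) := by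
      exact_mod_cast G.sum_degrees_eq_twice_card_edges.symm
    rw [this, ← card_univ]
    exact sq_sum_le_card_mul_sum_sq
  have hdegrees : ∑ b, (G.degree b : ℝ) ^ 2 ≤ (Fintype.card V : ℝ) * d ^ 2 := by
    calc ∑ b, (G.degree b : ℝ) ^ 2 ≤ ∑ _b : V, d ^ 2 := by gcongr with b; exact hdeg b
      _ = (Fintype.card V : ℝ) * d ^ 2 := by rw [sum_const, card_univ, nsmul_eq_mul]
  have hcodegrees := G.sq_sum_degree_sq_le
  set v : ℝ := (Fintype.card V : ℝ)
  set S := ∑ b, (G.degree b : ℝ) ^ 2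
  calc (2 * #G.edgeFinset : ℝ) ^ 4 = ((2 * #G.edgeFinset : ℝ) ^ 2) ^ 2 := by ring
    _ ≤ (v * S) ^ 2 := by gcongr
    _ = v ^ 2 * S ^ 2 := by ring
    _ ≤ v ^ 2 * (v ^ 2 * (2 * S + injCount (cycleGraph 4) G)) := by gcongr
    _ ≤ v ^ 2 * (v ^ 2 * (2 * (v * d ^ 2) + injCount (cycleGraph 4) G)) := by gcongr
    _ = 2 * v ^ 5 * d ^ 2 + v ^ 4 * injCount (cycleGraph 4) G := by ring

end Finite

end SimpleGraph

section Densities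

open SimpleGraph

variable {α β : Type*}

theorem vdegree_eq_degree [Fintype α] (G : SimpleGraph α) [DecidableRel G.Adj] (x : α) :
    vdegree G x = G.degree x := by
  rw [vdegree, Nat.card_eq_fintype_card, card_neighborSet_eq_degree]

theorem edgeCount_eq_card_edgeFinset (G : SimpleGraph α) [Fintype G.edgeSet] :
    edgeCount G = #G.edgeFinset := by
  rw [edgeCount, Nat.card_eq_fintype_card, edgeFinset_card]

variable {F : SimpleGraph α}

theorem numComponents_eq_one (hF : F.Connected) : numComponents F = 1 := by
  have := hF.preconnected.subsingleton_connectedComponent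
  have := hF.nonempty
  exact Nat.card_eq_one_iff_unique.mpr ⟨inferInstance, inferInstance⟩

theorem numBigComponents_eq_one (hF : F.Connected) (h2 : 2 ≤ Nat.card α) :
    numBigComponents F = 1 := by
  have := hF.preconnected.subsingleton_connectedComponent
  refine Nat.card_eq_one_iff_unique.mpr
    ⟨inferInstance, ⟨⟨F.connectedComponentMk hF.nonempty.some, ?_⟩⟩⟩
  have hsupp : (F.connectedComponentMk hF.nonempty.some).supp = Set.univ :=
    Set.eq_univ_of_forall fun w => Subsingleton.elim _ _
  rwa [hsupp, Nat.card_univ]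

theorem injDensity_of_connected (hF : F.Connected) (h2 : 2 ≤ Nat.card α) (G : SimpleGraph β)
    (d : ℝ) : injDensity F G d =
      injCount F G / (Nat.card β * d * (d - 1) ^ (Nat.card α - 2)) := by
  rw [injDensity, numComponents_eq_one hF, numBigComponents_eq_one hF h2, pow_one, pow_one,
    Nat.sub_sub]

theorem injDensity_nonneg (F : SimpleGraph α) (G : SimpleGraph β) {d : ℝ} (hd : 1 ≤ d) :
    0 ≤ injDensity F G d := by
  have : 0 ≤ d - 1 := by linarith
  unfold injDensity
  positivity

theorem edgeDensity_pow_four_le [Finite α] [Nonempty α] (G : SimpleGraph α) {d : ℝ} (hd : 1 < d)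
    (hdeg : ∀ x, (vdegree G x : ℝ) ≤ d) :
    (2 * edgeCount G / (Nat.card α : ℝ) ^ 2) ^ 4 ≤
      2 * (d / Nat.card α) ^ 2 / Nat.card α +
        (d / Nat.card α) ^ 3 * injDensity (cycleGraph 4) G d := by
  have := Fintype.ofFinite α
  classical
  have hedges := G.two_mul_card_edgeFinset_pow_four_le fun x => vdegree_eq_degree G x ▸ hdeg x
  rw [← Nat.card_eq_fintype_card, ← edgeCount_eq_card_edgeFinset] at hedges
  rw [injDensity_of_connected cycleGraph_connected (by simp),
    show Nat.card (Fin (3 + 1)) - 2 = 2 by simp]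
  have hv : 0 < (Nat.card α : ℝ) := by exact_mod_cast Nat.card_pos
  have hd1 : 0 < d - 1 := by linarith
  set v : ℝ := (Nat.card α : ℝ)
  set I : ℝ := (injCount (cycleGraph 4) G : ℝ)
  have hI : 0 ≤ I := Nat.cast_nonneg _
  calc (2 * edgeCount G / v ^ 2) ^ 4 = (2 * edgeCount G) ^ 4 / v ^ 8 := by ring
    _ ≤ (2 * v ^ 5 * d ^ 2 + v ^ 4 * I) / v ^ 8 := by gcongr
    _ = 2 * (d / v) ^ 2 / v + I / v ^ 4 := by field_simp
    _ ≤ 2 * (d / v) ^ 2 / v + I / v ^ 4 * (d / (d - 1)) ^ 2 := by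
        gcongr
        exact le_mul_of_one_le_right (by positivity)
          (one_le_pow₀ ((one_le_div hd1).mpr (by linarith)))
    _ = 2 * (d / v) ^ 2 / v + (d / v) ^ 3 * (I / (v * d * (d - 1) ^ 2)) := by field_simp

end Densities

theorem tendsto_nhds_zero_of_pow {ι : Type*} {l : Filter ι} {f : ι → ℝ} {n : ℕ} (hn : n ≠ 0)
    (hf : ∀ i, 0 ≤ f i) (h : Tendsto (fun i => f i ^ n) l (𝓝 0)) : Tendsto f l (𝓝 0) := by
  simpa only [Real.pow_rpow_inv_natCast (hf _) hn] using
    h.rpow_const_nhds_zero (p := (n⁻¹ : ℝ)) (by positivity)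

/-- If `(Gₙ,dₙ)` is an admissible sequence of large essential girth with
`v(Gₙ) → ∞` and `dₙ = O(v(Gₙ))`, then the edge density `2e(Gₙ)/v(Gₙ)² → 0`. -/
theorem stmt8 (V : ℕ → Type) [∀ n, Fintype (V n)] [∀ n, Nonempty (V n)]
    (G : ∀ n, SimpleGraph (V n)) (d : ℕ → ℝ)
    (hadm : ∀ n, Admissible (G n) (d n)) (hd : ∀ n, 1 < d n)
    (hgirth : LargeEssentialGirth V G d)
    (hv : Tendsto (fun n => (Nat.card (V n) : ℝ)) atTop atTop)
    (hO : ∃ C : ℝ, ∀ n, d n ≤ C * (Nat.card (V n) : ℝ)) :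
    Tendsto (fun n => 2 * (edgeCount (G n) : ℝ) / (Nat.card (V n) : ℝ) ^ 2)
      atTop (𝓝 0) := by
  obtain ⟨C, hC⟩ := hO
  have hbound (n : ℕ) : (2 * (edgeCount (G n) : ℝ) / (Nat.card (V n) : ℝ) ^ 2) ^ 4 ≤
      2 * C ^ 2 / Nat.card (V n) + C ^ 3 * injDensity (SimpleGraph.cycleGraph 4) (G n) (d n) := by
    have hvpos : 0 < (Nat.card (V n) : ℝ) := by exact_mod_cast Nat.card_pos
    have hratio_nonneg : 0 ≤ d n / Nat.card (V n) := div_nonneg (by linarith [hd n]) hvpos.le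
    have hratio_le : d n / Nat.card (V n) ≤ C := (div_le_iff₀ hvpos).mpr (hC n)
    have := injDensity_nonneg (SimpleGraph.cycleGraph 4) (G n) (hd n).le
    refine (edgeDensity_pow_four_le (G n) (hd n) (hadm n).2).trans ?_
    gcongr
  have hlim : Tendsto (fun n => 2 * C ^ 2 / Nat.card (V n) +
      C ^ 3 * injDensity (SimpleGraph.cycleGraph 4) (G n) (d n)) atTop (𝓝 0) := by
    simpa [div_eq_mul_inv] using
      (hv.inv_tendsto_atTop.const_mul _).add ((hgirth 4 (by norm_num)).const_mul _)
  exact tendsto_nhds_zero_of_pow four_ne_zero (fun n => by positivity)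
    (squeeze_zero (fun n => by positivity) hbound hlim)
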